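/- arXiv:0906.3471 — 6 statements merged into one kernel-verified Lean document; each statement's English description precedes it below -/
import Mathlib

section
/- Let ζ be a primitive n-th root of unity in a field K of characteristic zero, and let G = Σ_{i=0}^{n-1} ζ^{i²} be the classical Gaussian sum, with G' = Σ_{i=0}^{n-1} ζ^{-i²}. If n is odd, then G·G' = n. -/
/-!
Viewing `i ↦ ζ ^ i` as a primitive additive character `ψ` of `ZMod n`, the product is
`∑ x, ∑ y, ψ (x² - y²)`. Substituting `x = y + k` gives `∑ k, ψ (k²) ∑ y, ψ (2ky)`, and the inner
sum vanishes unless `2k = 0`; since `n` is odd, `2` is a unit, so only `k = 0` survives,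
contributing `n`.
-/

open Finset

namespace AddChar

variable {R R' : Type*} [CommRing R] [Fintype R] [CommRing R'] [IsDomain R']

theorem sum_sq_mul_sum_neg_sq {ψ : AddChar R R'} (hψ : ψ.IsPrimitive) (h2 : IsUnit (2 : R)) :
    (∑ x, ψ (x ^ 2)) * ∑ y, ψ (-y ^ 2) = Fintype.card R := by
  classical
  calc (∑ x, ψ (x ^ 2)) * ∑ y, ψ (-y ^ 2)
      = ∑ y, ∑ k, ψ ((y + k) ^ 2) * ψ (-y ^ 2) := by
        rw [sum_mul_sum, sum_comm]
        exact sum_congr rfl fun y _ =>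
          (Fintype.sum_bijective (y + ·) (AddGroup.addLeft_bijective y) _ _ fun _ => rfl).symm
    _ = ∑ k, (∑ y, ψ (y * (2 * k))) * ψ (k ^ 2) := by
        rw [sum_comm]
        refine sum_congr rfl fun k _ => ?_
        rw [sum_mul]
        refine sum_congr rfl fun y _ => ?_
        rw [← map_add_eq_mul, ← map_add_eq_mul]
        ring_nf
    _ = ∑ k : R, if k = 0 then (Fintype.card R : R') else 0 := by
        refine sum_congr rfl fun k _ => ?_
        rw [sum_mulShift _ hψ, h2.mul_right_eq_zero]
        split_ifs with hk <;> simp [hk]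
    _ = Fintype.card R := by rw [sum_ite_eq' univ (0 : R)]; simp

end AddChar

theorem ZMod.sum_range_natCast {M : Type*} [AddCommMonoid M] (n : ℕ) [NeZero n]
    (f : ZMod n → M) : ∑ i ∈ range n, f i = ∑ x : ZMod n, f x :=
  sum_nbij' (↑) ZMod.val (fun _ _ => mem_univ _) (fun x _ => mem_range.mpr x.val_lt)
    (fun _ hi => ZMod.val_cast_of_lt (mem_range.mp hi)) (fun x _ => ZMod.natCast_zmod_val x)
    fun _ _ => rfl

theorem ZMod.isUnit_two_of_odd {n : ℕ} (hn : Odd n) : IsUnit (2 : ZMod n) := by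
  simpa using (ZMod.isUnit_iff_coprime 2 n).mpr (Nat.coprime_two_left.mpr hn)

theorem AddChar.zmodChar_natCast_sq {C : Type*} [CommMonoid C] {n : ℕ} [NeZero n] {ζ : C}
    (hζ : ζ ^ n = 1) (i : ℕ) : zmodChar n hζ ((i : ZMod n) ^ 2) = ζ ^ (i ^ 2) := by
  rw [← Nat.cast_pow, zmodChar_apply']

theorem classical_gauss_mul_reciprocal_general {K : Type*} [Field K]
    (n : ℕ) (hodd : Odd n) (ζ : K) (hζ : IsPrimitiveRoot ζ n) :
    (∑ i ∈ Finset.range n, ζ ^ (i ^ 2)) * (∑ i ∈ Finset.range n, (ζ⁻¹) ^ (i ^ 2)) = (n : K) := by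
  have : NeZero n := ⟨hodd.pos.ne'⟩
  set ψ := AddChar.zmodChar n hζ.pow_eq_one
  have hG : ∑ i ∈ range n, ζ ^ (i ^ 2) = ∑ x : ZMod n, ψ (x ^ 2) := by
    rw [← ZMod.sum_range_natCast n]
    exact sum_congr rfl fun i _ => (AddChar.zmodChar_natCast_sq _ i).symm
  have hG' : ∑ i ∈ range n, ζ⁻¹ ^ (i ^ 2) = ∑ x : ZMod n, ψ (-x ^ 2) := by
    rw [← ZMod.sum_range_natCast n]
    refine sum_congr rfl fun i _ => ?_
    rw [AddChar.map_neg_eq_inv, AddChar.zmodChar_natCast_sq, inv_pow]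
  rw [hG, hG', AddChar.sum_sq_mul_sum_neg_sq (AddChar.zmodChar_primitive_of_primitive_root n hζ)
    (ZMod.isUnit_two_of_odd hodd), ZMod.card]

/-- For an odd positive integer `n` and a primitive `n`-th root of unity `ζ` in a field `K`
of characteristic zero, the classical Gaussian sum `G = Σ ζ^(i²)` and the reciprocal sum
`G' = Σ ζ^(-i²)` satisfy `G·G' = n`. -/
theorem classical_gauss_mul_reciprocal {K : Type*} [Field K] [CharZero K]
    (n : ℕ) (hn : 0 < n) (hodd : Odd n) (ζ : K) (hζ : IsPrimitiveRoot ζ n) :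
    (∑ i ∈ Finset.range n, ζ ^ (i ^ 2)) * (∑ i ∈ Finset.range n, (ζ⁻¹) ^ (i ^ 2)) = (n : K) :=
  classical_gauss_mul_reciprocal_general n hodd ζ hζ
end

section
/- Suppose ξ is an N-th root of unity in a field of characteristic zero, and ξ^{q²} = ξ for all integers q relatively prime to N. Then ξ^{24} = 1. -/
/-!
The hypothesis says `q² ≡ 1` modulo the order `d` of `ξ` for every `q` prime to `N`; since every
unit of `ZMod d` lifts to a unit of `ZMod N`, the unit group of `ZMod d` has exponent
λ(d) dividing 2.
Writing `d = 2ᵃ m` with `m` odd, the unit `2` modulo `m` gives `m ∣ 2² - 1 = 3` and the unit `3`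
modulo `2ᵃ` gives `2ᵃ ∣ 3² - 1 = 8`.
-/

open ArithmeticFunction

namespace ArithmeticFunction

theorem sq_modEq_one_of_carmichael_dvd_two {n a : ℕ} (h : carmichael n ∣ 2)
    (ha : a.Coprime n) : a ^ 2 ≡ 1 [MOD n] := by
  have hu : ZMod.unitOfCoprime a ha ^ 2 = 1 := by
    obtain ⟨k, hk⟩ := h
    rw [← pow_carmichael (ZMod.unitOfCoprime a ha), hk, pow_mul, pow_carmichael, one_pow]
  rw [← ZMod.natCast_eq_natCast_iff]
  simpa [Units.ext_iff] using hu

theorem dvd_twentyFour_of_carmichael_dvd_two {n : ℕ} (hn : n ≠ 0) (h : carmichael n ∣ 2) :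
    n ∣ 24 := by
  obtain ⟨a, m, hm, rfl⟩ := Nat.exists_eq_two_pow_mul_odd hn
  have hm3 : m ∣ 3 := by
    have := sq_modEq_one_of_carmichael_dvd_two ((carmichael_dvd (dvd_mul_left m _)).trans h)
      (Nat.coprime_two_left.mpr hm)
    exact (Nat.modEq_iff_dvd' (by norm_num)).mp this.symm
  have h8 : 2 ^ a ∣ 8 := by
    have := sq_modEq_one_of_carmichael_dvd_two ((carmichael_dvd (dvd_mul_right _ m)).trans h)
      (Nat.Coprime.pow_right a (by norm_num : Nat.Coprime 3 2))
    exact (Nat.modEq_iff_dvd' (by norm_num)).mp this.symm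
  exact mul_dvd_mul h8 hm3

theorem carmichael_orderOf_dvd_two {G : Type*} [Group G] {x : G} {N : ℕ} (hN : N ≠ 0)
    (hxN : x ^ N = 1) (h : ∀ q : ℤ, Int.gcd q N = 1 → x ^ (q ^ 2) = x) :
    carmichael (orderOf x) ∣ 2 := by
  have : NeZero N := ⟨hN⟩
  have hd : orderOf x ∣ N := orderOf_dvd_of_pow_eq_one hxN
  rw [carmichael_eq_exponent (ne_zero_of_dvd_ne_zero hN hd),
    Monoid.exponent_dvd_iff_forall_pow_eq_one]
  intro u
  obtain ⟨v, rfl⟩ := ZMod.unitsMap_surjective hd u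
  have hq : x ^ ((v : ZMod N).val ^ 2 : ℤ) = x ^ (1 : ℤ) := by
    rw [zpow_one]
    exact h _ (by rw [Int.gcd_natCast_natCast]; exact ZMod.val_coe_unit_coprime v)
  rw [zpow_eq_zpow_iff_modEq, ← ZMod.intCast_eq_intCast_iff] at hq
  ext
  simpa [ZMod.unitsMap_val, ZMod.natCast_val] using hq

theorem orderOf_dvd_twentyFour {G : Type*} [Group G] {x : G} {N : ℕ} (hN : 0 < N)
    (hxN : x ^ N = 1) (h : ∀ q : ℤ, Int.gcd q N = 1 → x ^ (q ^ 2) = x) :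
    orderOf x ∣ 24 :=
  dvd_twentyFour_of_carmichael_dvd_two
    (isOfFinOrder_iff_pow_eq_one.mpr ⟨N, hN, hxN⟩).orderOf_pos.ne'
    (carmichael_orderOf_dvd_two hN.ne' hxN h)

end ArithmeticFunction

theorem definition_of_24_general {K : Type*} [Field K]
    (N : ℕ) (hN : 0 < N) (ξ : K) (hξ : ξ ^ N = 1)
    (h : ∀ q : ℤ, Int.gcd q N = 1 → ξ ^ (q ^ 2) = ξ) :
    ξ ^ 24 = 1 := by
  set ζ : Kˣ := Units.ofPowEqOne ξ N hξ hN.ne'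
  have hζ : ∀ q : ℤ, Int.gcd q N = 1 → ζ ^ (q ^ 2) = ζ := fun q hq =>
    Units.ext (by simpa [Units.val_zpow_eq_zpow_val, ζ] using h q hq)
  have hord : orderOf ζ ∣ 24 :=
    orderOf_dvd_twentyFour hN (Units.pow_ofPowEqOne hξ hN.ne') hζ
  simpa [ζ] using congrArg Units.val (orderOf_dvd_iff_pow_eq_one.mp hord)

/-- "Definition of 24": if `ξ` is an `N`-th root of unity in a field of characteristic zero
and `ξ^(q²) = ξ` for every integer `q` coprime to `N`, then `ξ²⁴ = 1`. -/
theorem definition_of_24 {K : Type*} [Field K] [CharZero K]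
    (N : ℕ) (hN : 0 < N) (ξ : K) (hξ : ξ ^ N = 1)
    (h : ∀ q : ℤ, Int.gcd q N = 1 → ξ ^ (q ^ 2) = ξ) :
    ξ ^ 24 = 1 :=
  definition_of_24_general N hN ξ hξ h
end

section
/- Suppose ξ is an N-th root of unity with N odd in a field of characteristic zero, and ξ^{q²} = ξ for all integers q relatively prime to N. Then ξ³ = 1. -/
theorem IsUnit.pow_three_eq_one_of_pow_four_eq_self {M : Type*} [Monoid M] {x : M}
    (hx : IsUnit x) (h4 : x ^ 4 = x) : x ^ 3 = 1 :=
  hx.mul_right_cancel (by rw [one_mul, ← pow_succ, h4])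

theorem Int.gcd_two_natCast_of_odd {N : ℕ} (hodd : Odd N) : Int.gcd 2 N = 1 :=
  Int.gcd_natCast_natCast 2 N ▸ hodd.coprime_two_left

theorem definition_of_24_odd_general {K : Type*} [Field K]
    (N : ℕ) (hodd : Odd N) (ξ : K) (hξ : ξ ^ N = 1)
    (h : ∀ q : ℤ, Int.gcd q N = 1 → ξ ^ (q ^ 2) = ξ) :
    ξ ^ 3 = 1 := by
  have hunit : IsUnit ξ := IsUnit.of_pow_eq_one hξ hodd.pos.ne'
  have h4 : ξ ^ 4 = ξ := by
    have h2 := h 2 (Int.gcd_two_natCast_of_odd hodd)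
    rwa [show (2 : ℤ) ^ 2 = ((4 : ℕ) : ℤ) by norm_num, zpow_natCast] at h2
  exact hunit.pow_three_eq_one_of_pow_four_eq_self h4

/-- If `ξ` is an `N`-th root of unity with `N` odd in a field of characteristic zero
and `ξ^(q²) = ξ` for every integer `q` coprime to `N`, then `ξ³ = 1`. -/
theorem definition_of_24_odd {K : Type*} [Field K] [CharZero K]
    (N : ℕ) (hN : 0 < N) (hodd : Odd N) (ξ : K) (hξ : ξ ^ N = 1)
    (h : ∀ q : ℤ, Int.gcd q N = 1 → ξ ^ (q ^ 2) = ξ) :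
    ξ ^ 3 = 1 :=
  definition_of_24_odd_general N hodd ξ hξ h
end

section
/- For a modular datum, the Gaussian sum g = Σ_{i∈I} n_i² t_i and the reciprocal Gaussian sum g' = Σ_{i∈I} n_i²/t_i satisfy g·g' = n·n_o², where n is the global dimension and n_o = s_{oo}. In particular both g and g' are nonzero. -/
open Finset

/-- A modular datum over a field `K` of characteristic zero: a finite index set `I` with a
distinguished element `o`, an involution `star` fixing `o`, a symmetric Verlinde matrix `S`
with nonzero first column, a diagonal Dehn matrix with entries `T i` of finite order
satisfying `T (star i) = T i`, such that `S² = n·C` for a nonzero global dimension `n`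
(where `C = (δ_{i,j*})`), the matrices `T⁻¹ST⁻¹` and `STS` are proportional, and the
Verlinde numbers `N_{ij}^k` are nonnegative integers. -/
structure ModularDatum (K : Type*) [Field K] [CharZero K]
    (I : Type*) [Fintype I] [DecidableEq I] where
  o : I
  star : I → I
  S : Matrix I I K
  T : I → K
  n : K
  star_involutive : Function.Involutive star
  star_o : star o = o
  S_symm : ∀ i j, S i j = S j i
  S_io_ne : ∀ i, S i o ≠ 0
  T_star : ∀ i, T (star i) = T i
  T_order : ∃ N : ℕ, 0 < N ∧ ∀ i, T i ^ N = 1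
  n_ne : n ≠ 0
  S_sq : ∀ i k, (∑ j, S i j * S j k) = n * (if i = star k then 1 else 0)
  proportional : ∃ c : K, ∀ i j,
    (T i)⁻¹ * S i j * (T j)⁻¹ = c * ∑ k, S i k * T k * S k j
  verlinde : ∀ i j k, ∃ m : ℕ,
    (1 / n) * ∑ l, S i l * S j l * S (star k) l / S o l = (m : K)

namespace ModularDatum

variable {K : Type*} [Field K] [CharZero K] {I : Type*} [Fintype I] [DecidableEq I]
variable (d : ModularDatum K I)

/-- The `i`-th dimension `n_i = s_{io}`. -/
def ni (i : I) : K := d.S i d.o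

/-- The Gaussian sum `g = Σ_i n_i² t_i`. -/
def gauss : K := ∑ i, d.ni i ^ 2 * d.T i

/-- The reciprocal Gaussian sum `g' = Σ_i n_i² / t_i`. -/
def gauss' : K := ∑ i, d.ni i ^ 2 * (d.T i)⁻¹

/-- The Verlinde numbers `N_{ij}^k = (1/n) Σ_l s_{il} s_{jl} s_{k*l} / s_{ol}`. -/
def Nc (i j k : I) : K := (1 / d.n) * ∑ l, d.S i l * d.S j l * d.S (d.star k) l / d.S d.o l

end ModularDatum

/-!
Write `c` for the constant with `T⁻¹ S T⁻¹ = c · S T S`. The `(o, o)` entry of this identity reads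
`t_o⁻² n_o = c g`, and the `(o, o)` entry of `S` times it reads, since `S² = n C`,
`t_o⁻¹ g' = c n t_o n_o`. Multiplying, `c g g' = c n n_o²`, and `c ≠ 0` because `c g = t_o⁻² n_o ≠ 0`.
-/

namespace ModularDatum

variable {K : Type*} [Field K] [CharZero K] {I : Type*} [Fintype I] [DecidableEq I]
variable (d : ModularDatum K I)

theorem T_ne_zero (i : I) : d.T i ≠ 0 := fun h => by
  obtain ⟨N, hN, hTN⟩ := d.T_order
  simpa [h, zero_pow hN.ne'] using hTN i

theorem sum_S_mul_S_mul (j : I) (f : I → K) :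
    ∑ k, (∑ i, d.S j i * d.S i k) * f k = d.n * f (d.star j) := by
  have hstar : ∀ k, (j = d.star k) ↔ (d.star j = k) := fun k =>
    ⟨fun h => by rw [h, d.star_involutive k], fun h => by rw [← h, d.star_involutive j]⟩
  simp only [d.S_sq, hstar, mul_ite, mul_one, mul_zero, ite_mul, zero_mul, sum_ite_eq,
    mem_univ, if_true]

theorem gauss_eq_sum : d.gauss = ∑ k, d.S d.o k * d.T k * d.S k d.o :=
  sum_congr rfl fun k _ => by rw [ni, d.S_symm d.o k]; ring

variable {d} {c : K}
  (hc : ∀ i j, (d.T i)⁻¹ * d.S i j * (d.T j)⁻¹ = c * ∑ k, d.S i k * d.T k * d.S k j)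
include hc

theorem mul_gauss_eq : c * d.gauss = (d.T d.o)⁻¹ * d.ni d.o * (d.T d.o)⁻¹ := by
  rw [gauss_eq_sum, ni, hc]

theorem gauss'_eq : d.gauss' = c * d.n * d.T d.o ^ 2 * d.ni d.o := by
  have h : (d.T d.o)⁻¹ * d.gauss' = c * (d.n * (d.T d.o * d.ni d.o)) :=
    calc (d.T d.o)⁻¹ * d.gauss'
        = ∑ i, d.S d.o i * ((d.T i)⁻¹ * d.S i d.o * (d.T d.o)⁻¹) := by
          rw [gauss', mul_sum]
          exact sum_congr rfl fun i _ => by rw [ni, d.S_symm d.o i]; ring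
      _ = c * ∑ k, (∑ i, d.S d.o i * d.S i k) * (d.T k * d.S k d.o) := by
          simp only [hc, mul_sum, sum_mul]
          rw [sum_comm]
          exact sum_congr rfl fun k _ => sum_congr rfl fun i _ => by ring
      _ = c * (d.n * (d.T d.o * d.ni d.o)) := by
          rw [sum_S_mul_S_mul, d.star_o, ni]
  have ht := d.T_ne_zero d.o
  rw [← mul_right_inj' (inv_ne_zero ht), h]
  field_simp

end ModularDatum

/-- For a modular datum, the Gaussian sum and the reciprocal Gaussian sum satisfy
`g·g' = n·n_o²`; in particular both are nonzero. -/
theorem ModularDatum.gauss_mul_gauss' {K : Type*} [Field K] [CharZero K]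
    {I : Type*} [Fintype I] [DecidableEq I] (d : ModularDatum K I) :
    d.gauss * d.gauss' = d.n * d.ni d.o ^ 2 ∧ d.gauss ≠ 0 ∧ d.gauss' ≠ 0 := by
  obtain ⟨c, hc⟩ := d.proportional
  have ht := d.T_ne_zero d.o
  have hno : d.ni d.o ≠ 0 := d.S_io_ne d.o
  have hcg : c * d.gauss ≠ 0 := by
    rw [mul_gauss_eq hc]
    exact mul_ne_zero (mul_ne_zero (inv_ne_zero ht) hno) (inv_ne_zero ht)
  have hc0 : c ≠ 0 := left_ne_zero_of_mul hcg
  refine ⟨?_, right_ne_zero_of_mul hcg, ?_⟩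
  · refine mul_left_cancel₀ hc0 ?_
    rw [← mul_assoc, mul_gauss_eq hc, gauss'_eq hc]
    field_simp
  · rw [gauss'_eq hc]
    exact mul_ne_zero (mul_ne_zero (mul_ne_zero hc0 d.n_ne) (pow_ne_zero 2 ht)) hno
end

section
/- For a modular datum, for each q ∈ I the map ξ_q sending the basis element b_i of the fusion ring to s_{iq}/n_q is a ring homomorphism from the fusion ring F to K; that is, ξ_q(b_i)ξ_q(b_j) = Σ_k N_{ij}^k ξ_q(b_k) and ξ_q(b_o) = 1. -/
open Finset

/-!
Everything rests on the orthogonality `Σ_k s_{k*l} s_{kq} = n δ_{lq}`. Since `S² = n C` with `C` the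
permutation matrix of `*`, and `S` commutes with its own square, `S` commutes with `C`, i.e.
`s_{i*j} = s_{ij*}`; together with `S² = n C` and symmetry this gives the orthogonality. Substituted
into the Verlinde formula, the sum over `k` then collapses to `l = q`:
`Σ_k N_{ij}^k s_{kq} = s_{iq} s_{jq} / n_q`.
-/

theorem commute_of_mul_self_eq_smul {R A : Type*} [GroupWithZero R] [Semigroup A]
    [MulAction R A] [SMulCommClass R A A] [IsScalarTower R A A]
    {a b : A} {c : R} (hc : c ≠ 0) (h : a * a = c • b) : Commute a b :=
  (Commute.smul_right_iff₀ hc).1 (h ▸ (Commute.refl a).mul_right (Commute.refl a))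

namespace ModularDatum

variable {K : Type*} [Field K] [CharZero K] {I : Type*} [Fintype I] [DecidableEq I]
variable (d : ModularDatum K I)

def starPerm : Equiv.Perm I := d.star_involutive.toPerm

theorem S_mul_S : d.S * d.S = d.n • d.starPerm.permMatrix K := by
  ext i k
  simp [Matrix.mul_apply, d.S_sq, PEquiv.toMatrix_apply, starPerm, d.star_involutive.eq_iff]

theorem S_star_left (i j : I) : d.S (d.star i) j = d.S i (d.star j) := by
  have h := congrFun₂ (commute_of_mul_self_eq_smul d.n_ne d.S_mul_S).eq i j
  rw [PEquiv.mul_toMatrix_toPEquiv, PEquiv.toMatrix_toPEquiv_mul] at h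
  simpa [starPerm] using h.symm

theorem sum_S_star_mul_S (l q : I) :
    ∑ k, d.S (d.star k) l * d.S k q = if l = q then d.n else 0 := by
  have h (k : I) : d.S (d.star k) l = d.S (d.star l) k := by rw [d.S_star_left, d.S_symm]
  simp_rw [h, d.S_sq, d.star_involutive.injective.eq_iff]
  simp

theorem ni_ne_zero (q : I) : d.ni q ≠ 0 := d.S_io_ne q

theorem S_o_left (q : I) : d.S d.o q = d.ni q := d.S_symm _ _

theorem sum_Nc_mul_S (i j q : I) :
    ∑ k, d.Nc i j k * d.S k q = d.S i q * d.S j q / d.ni q := by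
  calc ∑ k, d.Nc i j k * d.S k q
      = 1 / d.n * ∑ l, d.S i l * d.S j l / d.S d.o l * ∑ k, d.S (d.star k) l * d.S k q := by
        simp only [Nc, Finset.mul_sum, Finset.sum_mul]
        rw [Finset.sum_comm]
        refine Finset.sum_congr rfl fun k _ => Finset.sum_congr rfl fun l _ => ?_
        ring
    _ = 1 / d.n * (d.S i q * d.S j q / d.ni q * d.n) := by
        simp [sum_S_star_mul_S, S_o_left]
    _ = d.S i q * d.S j q / d.ni q := by
        field_simp [d.n_ne]

end ModularDatum

/-- For a modular datum, for each `q ∈ I` the assignment `b_i ↦ s_{iq}/n_q` is a ring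
homomorphism from the fusion ring to `K`: it is multiplicative with respect to the
structure constants `N_{ij}^k`, and it sends the unit `b_o` to `1`. -/
theorem ModularDatum.xi_ringHom {K : Type*} [Field K] [CharZero K]
    {I : Type*} [Fintype I] [DecidableEq I] (d : ModularDatum K I) :
    (∀ q i j, (d.S i q / d.ni q) * (d.S j q / d.ni q)
        = ∑ k, d.Nc i j k * (d.S k q / d.ni q)) ∧
    ∀ q, d.S d.o q / d.ni q = 1 := by
  refine ⟨fun q i j => ?_, fun q => ?_⟩
  · simp_rw [← mul_div_assoc, ← Finset.sum_div, d.sum_Nc_mul_S]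
    field_simp [d.ni_ne_zero q]
  · rw [d.S_o_left]
    exact div_self (d.ni_ne_zero q)
end

section
/- For the semion datum with Verlinde matrix S = [[1,1],[1,-1]] and Dehn matrix T = diag(1, i) over C, there exist no nonzero complex numbers D, ℓ such that the matrices S' = S/D and T' = T/ℓ satisfy S'⁴ = E, T'⁴ = E, and (T'S')³ = S'². That is, the projective representation of SL(2,Z/4) determined by S and T cannot be lifted to a linear representation of SL(2,Z/4). -/
open Complex

/-- The Verlinde matrix of the semion datum. -/
noncomputable def semionS : Matrix (Fin 2) (Fin 2) ℂ := !![1, 1; 1, -1]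

/-- The Dehn matrix of the semion datum. -/
noncomputable def semionT : Matrix (Fin 2) (Fin 2) ℂ := !![1, 0; 0, I]

/-!
Rescaling by `a = D⁻¹` and `b = ℓ⁻¹` only multiplies each relation by a scalar. Since `S² = 2E`,
`T⁴ = E` and `(TS)³ = (1+i)S²`, the three relations become `4a⁴ = 1`, `b⁴ = 1` and
`ab³(1+i) = 1`. Raising the last one to the fourth power forces `(1+i)⁴ = 4`, whereas
`(1+i)⁴ = -4`.
-/

namespace Matrix

variable {n K : Type*} [Fintype n] [DecidableEq n] [Nonempty n] [Field K]

theorem smul_one_eq_smul_one_iff {c d : K} : c • (1 : Matrix n n K) = d • 1 ↔ c = d :=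
  (smul_left_injective K one_ne_zero).eq_iff

theorem smul_one_eq_one_iff {c : K} : c • (1 : Matrix n n K) = 1 ↔ c = 1 := by
  simpa only [one_smul] using smul_one_eq_smul_one_iff (n := n) (c := c) (d := 1)

theorem pow_four_eq_sq_of_lift {S T : Matrix n n K} {s p a b : K}
    (hS : S ^ 2 = s • 1) (hT : T ^ 4 = 1) (hTS : (T * S) ^ 3 = p • S ^ 2)
    (h₁ : (a • S) ^ 4 = 1) (h₂ : (b • T) ^ 4 = 1) (h₃ : ((b • T) * (a • S)) ^ 3 = (a • S) ^ 2) :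
    p ^ 4 = s ^ 2 := by
  have hS4 : S ^ 4 = (s ^ 2) • 1 := by
    rw [show 4 = 2 * 2 from rfl, pow_mul, hS, smul_pow, one_pow]
  have ha : a ^ 4 * s ^ 2 = 1 := by
    rwa [smul_pow, hS4, smul_smul, smul_one_eq_one_iff] at h₁
  have hb : b ^ 4 = 1 := by
    rwa [smul_pow, hT, smul_one_eq_one_iff] at h₂
  have ha2s : a ^ 2 * s ≠ 0 := fun h ↦ one_ne_zero (by linear_combination (a ^ 2 * s) * h - ha)
  have hab : a * b ^ 3 * p = 1 := by
    rw [smul_mul_smul, smul_pow, hTS, hS, smul_pow, hS] at h₃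
    simp only [smul_smul, smul_one_eq_smul_one_iff] at h₃
    exact mul_left_cancel₀ ha2s (by linear_combination h₃)
  calc p ^ 4 = p ^ 4 * (a ^ 4 * s ^ 2) * (b ^ 4) ^ 3 := by rw [ha, hb]; ring
    _ = (a * b ^ 3 * p) ^ 4 * s ^ 2 := by ring
    _ = s ^ 2 := by rw [hab]; ring

end Matrix

theorem semionS_sq : semionS ^ 2 = (2 : ℂ) • 1 := by
  rw [semionS, sq, Matrix.mul_fin_two, Matrix.one_fin_two, Matrix.smul_of]
  norm_num

theorem semionT_pow_four : semionT ^ 4 = 1 := by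
  simp only [semionT, pow_succ, pow_zero, Matrix.one_fin_two, Matrix.mul_fin_two]
  norm_num

theorem semionT_mul_semionS_pow_three : (semionT * semionS) ^ 3 = (1 + I) • semionS ^ 2 := by
  rw [semionS_sq, smul_smul]
  simp only [semionT, semionS, pow_succ, pow_zero, Matrix.one_fin_two, Matrix.mul_fin_two,
    Matrix.smul_of]
  norm_num [add_mul, I_mul_I]
  refine ⟨⟨?_, ?_⟩, ?_⟩ <;> ring

theorem one_add_I_pow_four : (1 + I) ^ 4 = -4 := by
  linear_combination (I ^ 2 + 4 * I + 5) * I_sq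

/-- For the semion datum there exist no nonzero complex numbers `D`, `ℓ` such that
`S' = S/D` and `T' = T/ℓ` satisfy `S'⁴ = E`, `T'⁴ = E` and `(T'S')³ = S'²`: the projective
representation of `SL(2,ℤ/4)` determined by `S` and `T` cannot be lifted to a linear
representation. -/
theorem semion_no_lift :
    ¬ ∃ D ℓ : ℂ, D ≠ 0 ∧ ℓ ≠ 0 ∧
      (D⁻¹ • semionS) ^ 4 = 1 ∧ (ℓ⁻¹ • semionT) ^ 4 = 1 ∧
      ((ℓ⁻¹ • semionT) * (D⁻¹ • semionS)) ^ 3 = (D⁻¹ • semionS) ^ 2 := by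
  rintro ⟨D, ℓ, -, -, h₁, h₂, h₃⟩
  have h := Matrix.pow_four_eq_sq_of_lift semionS_sq semionT_pow_four
    semionT_mul_semionS_pow_three h₁ h₂ h₃
  rw [one_add_I_pow_four] at h
  norm_num at h
end
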